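/- arXiv:2501.18570 — 2 statements merged into one kernel-verified Lean document; each statement's English description precedes it below -/
import Mathlib

section
/- Let n ≥ 2 and let F be a forest on the vertex set {1,…,n} (a spanning forest, i.e., every vertex of {1,…,n} is a vertex of F, isolated vertices allowed) whose connected components have sizes n_1, n_2, …, n_k. Then the number of spanning trees of the complete graph K_n that contain F as a subgraph equals (n_1 · n_2 ⋯ n_k) · n^{k−2}. -/
/-!
Double counting. Let `F` be a forest on `n` vertices with `k ≥ 2` components, and count the pairs
`(T, (a, b))` where `T ⊇ F` is a spanning tree and `ab` is an edge of `T` joining two components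
of `F`. A forest with `k` components has `n - k` edges, so each `T` contributes `2 (k - 1)` pairs.
Grouped by `(a, b)` instead, they number `∑ N(F + ab)`, where `N(G)` counts the spanning trees
containing `G`. Adding `ab` merges the components of `a` and `b` into one of size `n_a + n_b`, so
by induction on `k` each term is `n ^ (k - 3) ∏ nᵢ (1 / n_a + 1 / n_b)`, and
`∑ (1 / n_a + 1 / n_b) = 2 n (k - 1)` because `∑ₓ 1 / nₓ = k`. Cancelling `2 (k - 1)` gives the
formula; for `k = 1` the forest is a tree.
-/

open Finset

namespace SimpleGraph

variable {V : Type*}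

section SupEdge

variable {G : SimpleGraph V} {u v : V}

theorem reachable_sup_edge_iff {x y : V} :
    (G ⊔ edge u v).Reachable x y ↔
      G.Reachable x y ∨ G.Reachable x u ∧ G.Reachable v y ∨
        G.Reachable x v ∧ G.Reachable u y := by
  constructor
  · rintro ⟨w⟩
    induction w with
    | nil => exact .inl .rfl
    | cons h _ ih =>
      rcases h with h | h
      · rcases ih with h' | ⟨h₁, h₂⟩ | ⟨h₁, h₂⟩
        · exact .inl (h.reachable.trans h')
        · exact .inr (.inl ⟨h.reachable.trans h₁, h₂⟩)
        · exact .inr (.inr ⟨h.reachable.trans h₁, h₂⟩)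
      obtain ⟨⟨rfl, rfl⟩ | ⟨rfl, rfl⟩, -⟩ := (edge_adj ..).mp h
      · rcases ih with h' | ⟨h₁, h₂⟩ | ⟨h₁, h₂⟩
        · exact .inr (.inl ⟨.rfl, h'⟩)
        · exact .inl (h₁.symm.trans h₂)
        · exact .inl h₂
      · rcases ih with h' | ⟨h₁, h₂⟩ | ⟨h₁, h₂⟩
        · exact .inr (.inr ⟨.rfl, h'⟩)
        · exact .inl h₂
        · exact .inl (h₁.symm.trans h₂)
  · have huv : (G ⊔ edge u v).Reachable u v := by
      obtain rfl | hne := eq_or_ne u v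
      · rfl
      · exact Adj.reachable (.inr (by simp [edge_adj, hne]))
    rintro (h | ⟨h₁, h₂⟩ | ⟨h₁, h₂⟩)
    · exact h.mono le_sup_left
    · exact (h₁.mono le_sup_left).trans (huv.trans (h₂.mono le_sup_left))
    · exact (h₁.mono le_sup_left).trans (huv.symm.trans (h₂.mono le_sup_left))

theorem supp_connectedComponentMk_sup_edge_left :
    ((G ⊔ edge u v).connectedComponentMk u).supp =
      (G.connectedComponentMk u).supp ∪ (G.connectedComponentMk v).supp := by
  ext y
  simp only [Set.mem_union, ConnectedComponent.mem_supp_iff, ConnectedComponent.eq,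
    reachable_sup_edge_iff]
  constructor
  · rintro (h | ⟨h, -⟩ | ⟨h, -⟩) <;> tauto
  · rintro (h | h)
    · exact .inl h
    · exact .inr (.inr ⟨h, .rfl⟩)

theorem supp_connectedComponentMk_sup_edge_of_not_reachable {x : V}
    (hu : ¬G.Reachable x u) (hv : ¬G.Reachable x v) :
    ((G ⊔ edge u v).connectedComponentMk x).supp = (G.connectedComponentMk x).supp := by
  ext y
  simp only [ConnectedComponent.mem_supp_iff, ConnectedComponent.eq, reachable_sup_edge_iff]
  constructor
  · rintro (h | ⟨-, h⟩ | ⟨-, h⟩)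
    · exact h
    · exact absurd h.symm hv
    · exact absurd h.symm hu
  · exact .inl

theorem bijective_map_sup_edge (h : ¬G.Reachable u v) :
    Function.Bijective fun c : {c : G.ConnectedComponent // c ≠ G.connectedComponentMk v} =>
      c.1.map (Hom.ofLE (le_sup_left : G ≤ G ⊔ edge u v)) := by
  constructor
  · rintro ⟨c, hc⟩ ⟨d, hd⟩ hcd
    induction c using ConnectedComponent.ind with | h x => ?_
    induction d using ConnectedComponent.ind with | h y => ?_
    simp only [ConnectedComponent.map_mk, Hom.coe_ofLE, id, ConnectedComponent.eq,
      reachable_sup_edge_iff, ne_eq] at hcd hc hd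
    rcases hcd with hxy | ⟨-, hvy⟩ | ⟨hxv, -⟩
    · exact Subtype.ext (ConnectedComponent.eq.mpr hxy)
    · exact absurd hvy.symm hd
    · exact absurd hxv hc
  · intro d
    induction d using ConnectedComponent.ind with | h x => ?_
    by_cases hx : G.Reachable x v
    · refine ⟨⟨G.connectedComponentMk u, fun e => h (ConnectedComponent.eq.mp e)⟩, ?_⟩
      simp only [ConnectedComponent.map_mk, Hom.coe_ofLE, id, ConnectedComponent.eq,
        reachable_sup_edge_iff]
      exact .inr (.inl ⟨.rfl, hx.symm⟩)
    · exact ⟨⟨G.connectedComponentMk x, fun e => hx (ConnectedComponent.eq.mp e)⟩, rfl⟩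

section Finite

variable [Finite V]

theorem ConnectedComponent.card_supp_ne_zero (c : G.ConnectedComponent) : Nat.card c.supp ≠ 0 :=
  have := c.nonempty_supp.to_subtype
  Nat.card_pos.ne'

theorem card_connectedComponent_sup_edge (h : ¬G.Reachable u v) :
    Nat.card (G ⊔ edge u v).ConnectedComponent + 1 = Nat.card G.ConnectedComponent := by
  classical
  rw [← Nat.card_eq_of_bijective _ (bijective_map_sup_edge h), ← Finite.card_option,
    Nat.card_congr (Equiv.optionSubtypeNe _)]

theorem card_supp_connectedComponentMk_sup_edge_left (h : ¬G.Reachable u v) :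
    Nat.card ((G ⊔ edge u v).connectedComponentMk u).supp =
      Nat.card (G.connectedComponentMk u).supp + Nat.card (G.connectedComponentMk v).supp := by
  have hne : G.connectedComponentMk u ≠ G.connectedComponentMk v :=
    fun e => h (ConnectedComponent.eq.mp e)
  simp only [Nat.card_coe_set_eq, supp_connectedComponentMk_sup_edge_left]
  exact Set.ncard_union_eq (G.pairwise_disjoint_supp_connectedComponent hne)

theorem finprod_card_supp_sup_edge {K : Type*} [Semifield K] [CharZero K]
    (h : ¬G.Reachable u v) :
    ∏ᶠ c : (G ⊔ edge u v).ConnectedComponent, (Nat.card c.supp : K) =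
      (∏ᶠ c : G.ConnectedComponent, (Nat.card c.supp : K)) *
        ((Nat.card (G.connectedComponentMk u).supp : K)⁻¹ +
          (Nat.card (G.connectedComponentMk v).supp : K)⁻¹) := by
  classical
  have := Fintype.ofFinite G.ConnectedComponent
  have := Fintype.ofFinite (G ⊔ edge u v).ConnectedComponent
  set φ : G.ConnectedComponent → (G ⊔ edge u v).ConnectedComponent :=
    ConnectedComponent.map (Hom.ofLE le_sup_left)
  let cu : {c // c ≠ G.connectedComponentMk v} :=
    ⟨G.connectedComponentMk u, fun e => h (ConnectedComponent.eq.mp e)⟩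
  have hφ : ∀ c : {c // c ≠ cu}, (Nat.card (φ c.1.1).supp : K) = Nat.card c.1.1.supp := by
    rintro ⟨⟨c, hcv⟩, hcu⟩
    induction c using ConnectedComponent.ind with | h x => ?_
    simp only [cu, ne_eq, Subtype.mk.injEq, ConnectedComponent.eq] at hcu hcv
    simp only [φ, ConnectedComponent.map_mk, Hom.coe_ofLE, id]
    rw [supp_connectedComponentMk_sup_edge_of_not_reachable hcu hcv]
  have hu := (Nat.cast_ne_zero (R := K)).mpr (G.connectedComponentMk u).card_supp_ne_zero
  have hv := (Nat.cast_ne_zero (R := K)).mpr (G.connectedComponentMk v).card_supp_ne_zero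
  rw [finprod_eq_prod_of_fintype, finprod_eq_prod_of_fintype,
    ← Fintype.prod_bijective _ (bijective_map_sup_edge h)
      (fun c => (Nat.card (φ c.1).supp : K)) _ fun _ => rfl,
    Fintype.prod_eq_mul_prod_subtype_ne _ (G.connectedComponentMk v),
    Fintype.prod_eq_mul_prod_subtype_ne _ cu, Fintype.prod_eq_mul_prod_subtype_ne _ cu,
    Fintype.prod_congr _ _ hφ]
  simp only [cu, φ, ConnectedComponent.map_mk, Hom.coe_ofLE, id,
    card_supp_connectedComponentMk_sup_edge_left h, Nat.cast_add]
  field_simp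
  ring

end Finite

end SupEdge

theorem IsAcyclic.adj_of_le_of_reachable {F T : SimpleGraph V} (hT : T.IsAcyclic) (hle : F ≤ T)
    {a b : V} (hadj : T.Adj a b) (hreach : F.Reachable a b) : F.Adj a b := by
  by_contra hF
  refine isAcyclic_iff_forall_adj_isBridge.mp hT hadj (hreach.mono fun x y hxy => ?_)
  rw [deleteEdges_adj, Set.mem_singleton_iff]
  exact ⟨hle hxy, fun e => hF ((adj_congr_of_sym2 _ e).mp hxy)⟩

theorem card_connectedComponent_bot :
    Nat.card (⊥ : SimpleGraph V).ConnectedComponent = Nat.card V := by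
  refine (Nat.card_eq_of_bijective _ ⟨fun x y hxy => ?_, Quot.mk_surjective⟩).symm
  simpa using ConnectedComponent.eq.mp hxy

theorem deleteEdges_sup_edge_of_adj {G : SimpleGraph V} {u v : V} (h : G.Adj u v) :
    G.deleteEdges {s(u, v)} ⊔ edge u v = G := by
  ext x y
  simp only [sup_adj, deleteEdges_adj, Set.mem_singleton_iff, edge_adj]
  grind [adj_congr_of_sym2, Adj.ne, Adj.symm]

theorem IsAcyclic.card_edgeFinset_add_card_connectedComponent [Fintype V]
    {F : SimpleGraph V} [Fintype F.edgeSet] (hF : F.IsAcyclic) :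
    #F.edgeFinset + Nat.card F.ConnectedComponent = Fintype.card V := by
  classical
  induction hn : #F.edgeFinset generalizing F with
  | zero =>
    obtain rfl : F = ⊥ := by simpa using hn
    rw [zero_add, card_connectedComponent_bot, Nat.card_eq_fintype_card]
  | succ n ih =>
    obtain ⟨e, he⟩ := card_pos.mp (show 0 < #F.edgeFinset by omega)
    induction e using Sym2.ind with | h u v => ?_
    have hadj : F.Adj u v := by simpa using he
    have hbridge : ¬(F.deleteEdges {s(u, v)}).Reachable u v :=
      isAcyclic_iff_forall_adj_isBridge.mp hF hadj
    have hk := card_connectedComponent_sup_edge hbridge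
    rw [deleteEdges_sup_edge_of_adj hadj] at hk
    have hedges : (F.deleteEdges {s(u, v)}).edgeFinset = F.edgeFinset.erase s(u, v) := by
      ext
      simp [and_comm]
    have := ih (F := F.deleteEdges {s(u, v)}) (hF.anti (deleteEdges_le _))
      (by rw [hedges, card_erase_of_mem he, hn, Nat.add_sub_cancel])
    omega

theorem IsTree.card_isTree_ge {F : SimpleGraph V} (hF : F.IsTree) :
    Nat.card {T // F ≤ T ∧ T.IsTree} = 1 := by
  refine Nat.card_eq_one_iff_unique.mpr
    ⟨⟨fun T₁ T₂ => Subtype.ext ?_⟩, ⟨⟨F, le_rfl, hF⟩⟩⟩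
  have hmin (T : {T // F ≤ T ∧ T.IsTree}) : F = T :=
    (isTree_iff_minimal_connected.mp T.2.2).eq_of_le hF.connected T.2.1
  rw [← hmin, ← hmin]

theorem Connected.finprod_card_supp {G : SimpleGraph V} (hG : G.Connected) :
    ∏ᶠ c : G.ConnectedComponent, Nat.card c.supp = Nat.card V := by
  have := hG.preconnected.subsingleton_connectedComponent
  have : Unique G.ConnectedComponent :=
    _root_.uniqueOfSubsingleton (G.connectedComponentMk hG.nonempty.some)
  have hsupp : (default : G.ConnectedComponent).supp = Set.univ :=
    Set.eq_univ_of_forall fun x => (ConnectedComponent.mem_supp_iff _ x).mpr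
      (Subsingleton.elim (G.connectedComponentMk x) _)
  rw [finprod_unique, hsupp, Nat.card_univ]

section Counting

open scoped Classical

variable [Fintype V] {F T : SimpleGraph V}

theorem IsTree.card_adj_not_reachable (hT : T.IsTree) (hF : F.IsAcyclic) (hle : F ≤ T) :
    #{p : V × V | T.Adj p.1 p.2 ∧ ¬F.Reachable p.1 p.2} =
      2 * (Nat.card F.ConnectedComponent - 1) := by
  set darts : SimpleGraph V → Finset (V × V) := fun G => univ.filter fun p => G.Adj p.1 p.2
  have hpairs : univ.filter (fun p : V × V => T.Adj p.1 p.2 ∧ ¬F.Reachable p.1 p.2) =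
      darts T \ darts F := by
    ext ⟨a, b⟩
    simp only [darts, mem_sdiff, mem_filter, mem_univ, true_and]
    exact ⟨fun h => ⟨h.1, fun hF => h.2 hF.reachable⟩,
      fun h => ⟨h.1, fun hr => h.2 (hT.isAcyclic.adj_of_le_of_reachable hle h.1 hr)⟩⟩
  have hsub : darts F ⊆ darts T := monotone_filter_right _ fun _ _ h => hle h
  have hFdarts : 2 * #F.edgeFinset = #(darts F) := two_mul_card_edgeFinset F
  have hTdarts : 2 * #T.edgeFinset = #(darts T) := two_mul_card_edgeFinset T
  have hFcard := hF.card_edgeFinset_add_card_connectedComponent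
  have hTcard := hT.card_edgeFinset
  rw [hpairs, card_sdiff_of_subset hsub]
  omega

theorem sum_card_isTree_sup_edge (hF : F.IsAcyclic) :
    ∑ p : V × V with ¬F.Reachable p.1 p.2,
        Nat.card {T // F ⊔ edge p.1 p.2 ≤ T ∧ T.IsTree} =
      2 * (Nat.card F.ConnectedComponent - 1) * Nat.card {T // F ≤ T ∧ T.IsTree} := by
  have hcard (P : SimpleGraph V → Prop) [DecidablePred P] :
      Nat.card {T // P T} = #(univ.filter P) := by
    rw [Nat.card_eq_fintype_card, Fintype.card_subtype]
  set trees := univ.filter fun T : SimpleGraph V => F ≤ T ∧ T.IsTree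
  set adj : V × V → SimpleGraph V → Prop := fun p T => T.Adj p.1 p.2
  set pairs : Finset (V × V) := {p | ¬F.Reachable p.1 p.2}
  calc ∑ p ∈ pairs, Nat.card {T // F ⊔ edge p.1 p.2 ≤ T ∧ T.IsTree}
      = ∑ p ∈ pairs, #(trees.bipartiteAbove adj p) := by
        refine sum_congr rfl fun p hp => ?_
        have hne : p.1 ≠ p.2 := fun h => (mem_filter.mp hp).2 (h ▸ .rfl)
        rw [hcard, bipartiteAbove, filter_filter]
        simp only [adj, sup_le_iff, edge_le_iff, hne, false_or, and_right_comm]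
    _ = ∑ T ∈ trees, #(pairs.bipartiteBelow adj T) :=
        sum_card_bipartiteAbove_eq_sum_card_bipartiteBelow _
    _ = ∑ _T ∈ trees, 2 * (Nat.card F.ConnectedComponent - 1) := by
        refine sum_congr rfl fun T hT => ?_
        obtain ⟨hle, hT⟩ := (mem_filter.mp hT).2
        rw [bipartiteBelow, filter_filter, ← hT.card_adj_not_reachable hF hle]
        simp only [adj, and_comm]
    _ = 2 * (Nat.card F.ConnectedComponent - 1) * Nat.card {T // F ≤ T ∧ T.IsTree} := by
        rw [sum_const, smul_eq_mul, hcard, mul_comm]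

theorem ConnectedComponent.card_supp_eq_card_filter {G : SimpleGraph V}
    (c : G.ConnectedComponent) : Nat.card c.supp = #{y | G.connectedComponentMk y = c} := by
  rw [Nat.card_eq_fintype_card, Fintype.card_subtype]
  simp only [ConnectedComponent.mem_supp_iff]

theorem card_supp_connectedComponentMk (G : SimpleGraph V) (x : V) :
    Nat.card (G.connectedComponentMk x).supp = #{y | G.Reachable x y} := by
  simp only [ConnectedComponent.card_supp_eq_card_filter, ConnectedComponent.eq, reachable_comm]

variable {K : Type*} [Field K] [CharZero K]

theorem sum_inv_card_supp (G : SimpleGraph V) :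
    ∑ x, (Nat.card (G.connectedComponentMk x).supp : K)⁻¹ = Nat.card G.ConnectedComponent := by
  have := Fintype.ofFinite G.ConnectedComponent
  rw [← sum_fiberwise univ G.connectedComponentMk, Nat.card_eq_fintype_card,
    Fintype.card_eq_sum_ones, Nat.cast_sum, Nat.cast_one]
  refine sum_congr rfl fun c _ => ?_
  calc ∑ y with G.connectedComponentMk y = c, (Nat.card (G.connectedComponentMk y).supp : K)⁻¹
      = ∑ y with G.connectedComponentMk y = c, (Nat.card c.supp : K)⁻¹ :=
        sum_congr rfl fun y hy => by rw [(mem_filter.mp hy).2]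
    _ = 1 := by
        rw [sum_const, nsmul_eq_mul, ← c.card_supp_eq_card_filter,
          mul_inv_cancel₀ (Nat.cast_ne_zero.mpr c.card_supp_ne_zero)]

theorem sum_inv_card_supp_not_reachable (G : SimpleGraph V) :
    ∑ p : V × V with ¬G.Reachable p.1 p.2,
        ((Nat.card (G.connectedComponentMk p.1).supp : K)⁻¹ +
          (Nat.card (G.connectedComponentMk p.2).supp : K)⁻¹) =
      2 * Fintype.card V * (Nat.card G.ConnectedComponent - 1) := by
  set σ : V → K := fun x => (Nat.card (G.connectedComponentMk x).supp : K)⁻¹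
  have hrow (a : V) : ∑ b with ¬G.Reachable a b, σ a = Fintype.card V * σ a - 1 := by
    have hpos := (Nat.cast_ne_zero (R := K)).mpr (G.connectedComponentMk a).card_supp_ne_zero
    have hcount := card_filter_add_card_filter_not (s := univ) (G.Reachable a)
    rw [← card_supp_connectedComponentMk, card_univ, ← Nat.cast_inj (R := K), Nat.cast_add]
      at hcount
    rw [sum_const, nsmul_eq_mul]
    simp only [σ]
    field_simp
    linear_combination hcount
  have hswap : ∑ p : V × V with ¬G.Reachable p.1 p.2, σ p.2 =
      ∑ p : V × V with ¬G.Reachable p.1 p.2, σ p.1 :=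
    sum_equiv (Equiv.prodComm V V) (by simp [reachable_comm]) fun _ _ => rfl
  have hfirst : ∑ p : V × V with ¬G.Reachable p.1 p.2, σ p.1 =
      ∑ a, ∑ b with ¬G.Reachable a b, σ a := by
    rw [sum_filter, Fintype.sum_prod_type]
    simp_rw [← sum_filter]
  rw [sum_add_distrib, hswap, hfirst]
  simp only [hrow, sum_sub_distrib, ← mul_sum, sum_inv_card_supp, sum_const, card_univ, σ]
  ring

theorem card_isTree_ge_of_sup_edge (hF : F.IsAcyclic) (hk : 2 ≤ Nat.card F.ConnectedComponent)
    (ih : ∀ a b, ¬F.Reachable a b → (Nat.card {T // F ⊔ edge a b ≤ T ∧ T.IsTree} : K) =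
      (∏ᶠ c : (F ⊔ edge a b).ConnectedComponent, (Nat.card c.supp : K)) *
        (Fintype.card V : K) ^ ((Nat.card (F ⊔ edge a b).ConnectedComponent : ℤ) - 2)) :
    (Nat.card {T // F ≤ T ∧ T.IsTree} : K) =
      (∏ᶠ c : F.ConnectedComponent, (Nat.card c.supp : K)) *
        (Fintype.card V : K) ^ ((Nat.card F.ConnectedComponent : ℤ) - 2) := by
  obtain ⟨m, hm⟩ : ∃ m, Nat.card F.ConnectedComponent = m + 2 :=
    ⟨_, (Nat.sub_add_cancel hk).symm⟩
  obtain ⟨c₀⟩ := (Nat.card_pos_iff.mp (by omega : 0 < Nat.card F.ConnectedComponent)).1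
  have hn : (Fintype.card V : K) ≠ 0 := by
    exact_mod_cast (Fintype.card_pos_iff.mpr ⟨c₀.out⟩).ne'
  set P := ∏ᶠ c : F.ConnectedComponent, (Nat.card c.supp : K)
  set σ : V → K := fun x => (Nat.card (F.connectedComponentMk x).supp : K)⁻¹
  have hterm (p : V × V) (hp : p ∈ ({p | ¬F.Reachable p.1 p.2} : Finset (V × V))) :
      (Nat.card {T // F ⊔ edge p.1 p.2 ≤ T ∧ T.IsTree} : K) =
        P * (Fintype.card V : K) ^ ((m : ℤ) - 1) * (σ p.1 + σ p.2) := by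
    have hp : ¬F.Reachable p.1 p.2 := (mem_filter.mp hp).2
    have hk' := card_connectedComponent_sup_edge hp
    rw [ih _ _ hp, finprod_card_supp_sup_edge hp,
      show ((Nat.card (F ⊔ edge p.1 p.2).ConnectedComponent : ℕ) : ℤ) - 2 = m - 1 by omega]
    ring
  have hdc := sum_card_isTree_sup_edge hF
  rw [hm, show m + 2 - 1 = m + 1 by omega] at hdc
  have hdcK := congrArg (Nat.cast (R := K)) hdc
  push_cast at hdcK
  rw [sum_congr rfl hterm, ← mul_sum, sum_inv_card_supp_not_reachable, hm] at hdcK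
  have h2 : (2 * (m + 1) : K) ≠ 0 := by exact_mod_cast (by omega : 2 * (m + 1) ≠ 0)
  apply mul_left_cancel₀ h2
  rw [← hdcK, hm, show ((m + 2 : ℕ) : ℤ) - 2 = m - 1 + 1 by push_cast; ring,
    zpow_add_one₀ hn]
  push_cast
  ring

theorem card_isTree_ge_of_isAcyclic (hF : F.IsAcyclic) :
    (Nat.card {T // F ≤ T ∧ T.IsTree} : K) =
      (∏ᶠ c : F.ConnectedComponent, (Nat.card c.supp : K)) *
        (Fintype.card V : K) ^ ((Nat.card F.ConnectedComponent : ℤ) - 2) := by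
  obtain ⟨k, hk⟩ : ∃ k, Nat.card F.ConnectedComponent = k := ⟨_, rfl⟩
  induction k generalizing F with
  | zero =>
    -- No vertices: no trees, and the right-hand side vanishes because `0 ^ (-2 : ℤ) = 0`.
    have hV : IsEmpty V :=
      ⟨fun x => Nat.card_ne_zero.mpr ⟨⟨F.connectedComponentMk x⟩, inferInstance⟩ hk⟩
    have : IsEmpty {T // F ≤ T ∧ T.IsTree} :=
      ⟨fun T => (not_isEmpty_of_nonempty V (h := T.2.2.nonempty)) hV⟩
    rw [Nat.card_of_isEmpty, Fintype.card_eq_zero, hk]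
    simp
  | succ k ih =>
    rcases k with _ | k
    · obtain ⟨_, ⟨c₀⟩⟩ := Nat.card_eq_one_iff_unique.mp hk
      have : Nonempty V := ⟨c₀.out⟩
      have hconn : F.Connected := ⟨fun x y => ConnectedComponent.eq.mp (Subsingleton.elim _ _)⟩
      have hn : (Fintype.card V : K) ≠ 0 := by exact_mod_cast Fintype.card_ne_zero
      rw [IsTree.card_isTree_ge ⟨hconn, hF⟩, ← Nat.cast_finprod, hconn.finprod_card_supp, hk,
        Nat.card_eq_fintype_card]
      simp [hn]
    · refine card_isTree_ge_of_sup_edge hF (by omega) fun a b hab => ?_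
      have := card_connectedComponent_sup_edge hab
      exact ih (hF.sup_edge_of_not_reachable hab) (by omega)

end Counting

end SimpleGraph

theorem forest_extension_count_general (n : ℕ)
    (F : SimpleGraph (Fin n)) (hF : F.IsAcyclic) :
    (Nat.card {T : SimpleGraph (Fin n) // F ≤ T ∧ T.IsTree} : ℚ) =
      (∏ᶠ c : F.ConnectedComponent, (Nat.card c.supp : ℚ)) *
        (n : ℚ) ^ ((Nat.card F.ConnectedComponent : ℤ) - 2) := by
  simpa using SimpleGraph.card_isTree_ge_of_isAcyclic (K := ℚ) hF

/-- For `n ≥ 2` and a spanning forest `F` on the vertex set `Fin n`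
(an acyclic graph on all `n` vertices, isolated vertices allowed), the number of
spanning trees of the complete graph `K_n` containing `F` as a subgraph equals
`(n₁ ⋯ n_k) · n^(k-2)`, where `n₁, …, n_k` are the sizes of the connected components
of `F` and `k` is the number of components (the formula being read in `ℚ`,
with `n^(k-2)` an integer power). -/
theorem forest_extension_count (n : ℕ) (hn : 2 ≤ n)
    (F : SimpleGraph (Fin n)) (hF : F.IsAcyclic) :
    (Nat.card {T : SimpleGraph (Fin n) // F ≤ T ∧ T.IsTree} : ℚ) =
      (∏ᶠ c : F.ConnectedComponent, (Nat.card c.supp : ℚ)) *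
        (n : ℚ) ^ ((Nat.card F.ConnectedComponent : ℤ) - 2) :=
  forest_extension_count_general n F hF
end

section
/- Let n ≥ 3 and let e, f be two distinct edges of the complete graph K_n that share exactly one endpoint. The number of spanning trees of K_n containing both e and f equals 3·n^{n−4}; equivalently, the probability that a uniformly random spanning tree contains both e and f equals 3/n². -/
/-!
A spanning tree with a chosen root is the same as a parent map `V → Option V` (the root is
sent to `none`) in which every vertex reaches the root, so `n` times the number of trees
containing `ab` and `ac` is the number of rooted trees containing them. Such a rooted tree
contains exactly one of the three orientations `b → a, c → a`, `c → a, a → b`,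
`b → a, a → c` of the two edges, each a rooted forest with `n - 2` roots.

The rooted trees containing a rooted forest `p` with `k + 1` roots number `n ^ k` (Pitman):
`p` can be grafted in `n k` ways (a root to any vertex outside its own tree), each result has
`n ^ (k - 1)` rooted trees above it by induction, and every rooted tree above `p` arises from
exactly `k` of the grafts. Hence `n · #trees = 3 n ^ (n - 3)`.
-/

open Relation Finset SimpleGraph

namespace ParentMap

section Basic

variable {V : Type*} {f : V → Option V} {r x y : V}

def Step (f : V → Option V) (x y : V) : Prop := f x = some y

def IsRootedForest (f : V → Option V) : Prop :=
  ∀ v, ∃ r, ReflTransGen (Step f) v r ∧ f r = none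

def toGraph (f : V → Option V) : SimpleGraph V := fromRel (Step f)

theorem toGraph_adj : (toGraph f).Adj x y ↔ x ≠ y ∧ (f x = some y ∨ f y = some x) :=
  fromRel_adj ..

theorem isRootedForest_none : IsRootedForest (fun _ : V => none) :=
  fun v => ⟨v, .refl, rfl⟩

theorem toGraph_adj_adj_iff {a b c : V} (hab : a ≠ b) (hac : a ≠ c) (hbc : b ≠ c) :
    (toGraph f).Adj a b ∧ (toGraph f).Adj a c ↔
      (f b = some a ∧ f c = some a) ∨ (f c = some a ∧ f a = some b) ∨
        (f b = some a ∧ f a = some c) := by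
  simp only [toGraph_adj, hab, hac, ne_eq, not_false_eq_true, true_and]
  constructor
  · rintro ⟨hb | hb, hc | hc⟩
    · exact (hbc (Option.some_injective _ (hb.symm.trans hc))).elim
    all_goals tauto
  · tauto

theorem rightUnique_step : Relator.RightUnique (Step f) :=
  fun _ _ _ h h' => Option.some_injective _ (h.symm.trans h')

theorem eq_of_reflTransGen_of_eq_none (hr : f r = none) (h : ReflTransGen (Step f) r x) :
    x = r := by
  rcases h.cases_head with rfl | ⟨y, hy, -⟩
  · rfl
  · simp [Step, hr] at hy

theorem eq_of_reflTransGen_of_reflTransGen {r' : V} (h : ReflTransGen (Step f) x r)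
    (hr : f r = none) (h' : ReflTransGen (Step f) x r') (hr' : f r' = none) : r = r' := by
  rcases ReflTransGen.total_of_right_unique rightUnique_step h h' with h'' | h''
  · exact (eq_of_reflTransGen_of_eq_none hr h'').symm
  · exact eq_of_reflTransGen_of_eq_none hr' h''

theorem IsRootedForest.not_transGen_self (hf : IsRootedForest f) (x : V) :
    ¬ TransGen (Step f) x x := by
  obtain ⟨r, hxr, hr⟩ := hf x
  induction hxr using ReflTransGen.head_induction_on with
  | refl =>
    intro h
    obtain ⟨y, hry, -⟩ := TransGen.head'_iff.mp h
    simp [Step, hr] at hry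
  | head hxy _ ih =>
    intro h
    obtain ⟨y', hxy', hy'x⟩ := TransGen.head'_iff.mp h
    obtain rfl := rightUnique_step hxy hxy'
    exact ih (TransGen.tail' hy'x hxy)

theorem IsRootedForest.ne_of_step (hf : IsRootedForest f) (h : Step f x y) : x ≠ y := by
  rintro rfl
  exact hf.not_transGen_self x (TransGen.single h)

theorem IsRootedForest.not_step_of_step (hf : IsRootedForest f) (h : Step f x y) :
    ¬ Step f y x :=
  fun h' => hf.not_transGen_self x (TransGen.tail (TransGen.single h) h')

end Basic

section Graft

variable {V : Type*} [DecidableEq V] {f q : V → Option V} {u v : V}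

def graft (f : V → Option V) (u v : V) : V → Option V := Function.update f u (some v)

theorem step_le_graft (hu : f u = none) : Step f ≤ Step (graft f u v) := by
  intro x y h
  have hxu : x ≠ u := by rintro rfl; simp [Step, hu] at h
  simpa [Step, graft, Function.update_of_ne hxu] using h

theorem step_graft_le_iff (hu : f u = none) :
    Step (graft f u v) ≤ Step q ↔ Step f ≤ Step q ∧ q u = some v := by
  refine ⟨fun h => ⟨(step_le_graft hu).trans h, h u v (by simp [Step, graft])⟩, ?_⟩
  rintro ⟨hfq, hqu⟩ x y hxy
  by_cases hxu : x = u
  · subst hxu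
    simp only [Step, graft, Function.update_self, Option.some.injEq] at hxy
    rwa [← hxy]
  · exact hfq x y (by simpa [Step, graft, Function.update_of_ne hxu] using hxy)

theorem isRootedForest_graft (hf : IsRootedForest f) (hu : f u = none)
    (hv : ¬ ReflTransGen (Step f) v u) : IsRootedForest (graft f u v) := by
  intro x
  have hle := ReflTransGen.mono (step_le_graft (v := v) hu)
  obtain ⟨r, hxr, hr⟩ := hf x
  by_cases hru : r = u
  · subst hru
    obtain ⟨r', hvr', hr'⟩ := hf v
    have hr'r : r' ≠ r := by rintro rfl; exact hv hvr'
    refine ⟨r', (hle _ _ hxr).trans (.head (by simp [Step, graft]) (hle _ _ hvr')), ?_⟩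
    simpa [graft, Function.update_of_ne hr'r] using hr'
  · exact ⟨r, hle _ _ hxr, by simpa [graft, Function.update_of_ne hru] using hr⟩

theorem isRootedForest_graft_of_eq_none (hf : IsRootedForest f) (hu : f u = none)
    (hv : f v = none) (huv : u ≠ v) : IsRootedForest (graft f u v) :=
  isRootedForest_graft hf hu fun h => huv (eq_of_reflTransGen_of_eq_none hv h)

end Graft

section Roots

variable {V : Type*} [Fintype V] {f p q : V → Option V} {u v : V}

def roots (f : V → Option V) : Finset V := {v | f v = none}

@[simp]
theorem mem_roots : v ∈ roots f ↔ f v = none := by simp [roots]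

theorem roots_graft [DecidableEq V] : roots (graft f u v) = (roots f).erase u := by
  ext x
  by_cases hxu : x = u <;> simp [hxu, graft]

theorem roots_subset_of_step_le (h : Step p ≤ Step q) : roots q ⊆ roots p := by
  intro x hx
  rw [mem_roots] at hx ⊢
  cases hpx : p x with
  | none => rfl
  | some y => exact absurd (h x y hpx) (by simp [Step, hx])

open scoped Classical in
theorem IsRootedForest.card_filter_not_reflTransGen (hf : IsRootedForest f) (v : V) :
    #{u ∈ roots f | ¬ ReflTransGen (Step f) v u} = #(roots f) - 1 := by
  obtain ⟨r, hvr, hr⟩ := hf v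
  have hreach : {u ∈ roots f | ReflTransGen (Step f) v u} = {r} := by
    ext u
    simp only [mem_filter, mem_roots, mem_singleton]
    exact ⟨fun ⟨hu, hvu⟩ => eq_of_reflTransGen_of_reflTransGen hvu hu hvr hr, by grind⟩
  have := card_filter_add_card_filter_not (s := roots f) (ReflTransGen (Step f) v ·)
  rw [hreach, card_singleton] at this
  omega

end Roots

section Pitman

open scoped Classical

variable {V : Type*} [Fintype V] {p q : V → Option V}

noncomputable def grafts (p : V → Option V) : Finset (V × V) :=
  {m ∈ roots p ×ˢ univ | ¬ ReflTransGen (Step p) m.2 m.1}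

theorem IsRootedForest.card_grafts (hp : IsRootedForest p) :
    #(grafts p) = Fintype.card V * (#(roots p) - 1) := by
  rw [grafts, card_filter, sum_product_right]
  simp only [← card_filter, hp.card_filter_not_reflTransGen, sum_const, card_univ, smul_eq_mul]

variable [DecidableEq V]

noncomputable def treesAbove (p : V → Option V) : Finset (V → Option V) :=
  {q | IsRootedForest q ∧ Step p ≤ Step q ∧ #(roots q) = 1}

theorem mem_treesAbove :
    q ∈ treesAbove p ↔ IsRootedForest q ∧ Step p ≤ Step q ∧ #(roots q) = 1 := by
  simp [treesAbove]

theorem treesAbove_graft {u v : V} (hu : p u = none) :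
    treesAbove (graft p u v) = {q ∈ treesAbove p | q u = some v} := by
  ext q
  simp only [mem_filter, mem_treesAbove, step_graft_le_iff hu]
  tauto

theorem IsRootedForest.treesAbove_eq_singleton (hp : IsRootedForest p) (h : #(roots p) = 1) :
    treesAbove p = {p} := by
  refine eq_singleton_iff_unique_mem.mpr
    ⟨mem_treesAbove.mpr ⟨hp, le_rfl, h⟩, fun q hq => ?_⟩
  obtain ⟨-, hpq, hq⟩ := mem_treesAbove.mp hq
  have hroots : roots q = roots p :=
    eq_of_subset_of_card_le (roots_subset_of_step_le hpq) (by rw [h, hq])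
  funext x
  cases hpx : p x with
  | some y => exact hpq x y hpx
  | none => rwa [← mem_roots, hroots, mem_roots]

theorem card_grafts_filter_of_mem_treesAbove {q : V → Option V} (hq : q ∈ treesAbove p) :
    #{m ∈ grafts p | q m.1 = some m.2} = #(roots p) - 1 := by
  obtain ⟨hq, hpq, hq1⟩ := mem_treesAbove.mp hq
  have hsub := roots_subset_of_step_le hpq
  rw [← hq1, ← card_sdiff_of_subset hsub]
  refine card_nbij' Prod.fst (fun u => (u, (q u).getD u)) ?_ ?_ ?_ ?_
  · rintro ⟨u, v⟩ hm
    simp_all [grafts]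
  · intro u hu
    rw [coe_sdiff, Set.mem_sdiff, mem_coe, mem_coe, mem_roots, mem_roots] at hu
    obtain ⟨w, hw⟩ := Option.ne_none_iff_exists'.mp hu.2
    have hwu : ¬ ReflTransGen (Step p) w u :=
      fun hwu => hq.not_transGen_self u (.head' hw (ReflTransGen.mono hpq _ _ hwu))
    simp [grafts, hw, hu.1, hwu]
  · rintro ⟨u, v⟩ hm
    simp_all
  · intro u _
    rfl

theorem sum_card_treesAbove_graft :
    ∑ m ∈ grafts p, #(treesAbove (graft p m.1 m.2)) = (#(roots p) - 1) * #(treesAbove p) := by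
  calc ∑ m ∈ grafts p, #(treesAbove (graft p m.1 m.2))
      = ∑ m ∈ grafts p, #((treesAbove p).bipartiteAbove (fun m q => q m.1 = some m.2) m) := by
        refine sum_congr rfl fun m hm => ?_
        rw [treesAbove_graft (mem_roots.mp (mem_product.mp (mem_filter.mp hm).1).1)]
        rfl
    _ = ∑ q ∈ treesAbove p, #((grafts p).bipartiteBelow (fun m q => q m.1 = some m.2) q) :=
        sum_card_bipartiteAbove_eq_sum_card_bipartiteBelow _
    _ = ∑ _q ∈ treesAbove p, (#(roots p) - 1) :=
        sum_congr rfl fun _ hq => card_grafts_filter_of_mem_treesAbove hq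
    _ = (#(roots p) - 1) * #(treesAbove p) := by rw [sum_const, smul_eq_mul, mul_comm]

theorem IsRootedForest.card_treesAbove {k : ℕ} (hp : IsRootedForest p) (hk : #(roots p) = k + 1) :
    #(treesAbove p) = Fintype.card V ^ k := by
  induction k generalizing p with
  | zero => simp [hp.treesAbove_eq_singleton hk]
  | succ k ih =>
    have hgraft : ∀ m ∈ grafts p, #(treesAbove (graft p m.1 m.2)) = Fintype.card V ^ k := by
      intro m hm
      simp only [grafts, mem_filter, mem_product, mem_roots] at hm
      refine ih (isRootedForest_graft hp hm.1.1 hm.2) ?_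
      rw [roots_graft, card_erase_of_mem (mem_roots.mpr hm.1.1), hk, Nat.add_sub_cancel]
    have hsum := sum_card_treesAbove_graft (p := p)
    rw [sum_congr rfl hgraft, sum_const, smul_eq_mul, hp.card_grafts, hk, Nat.add_sub_cancel]
      at hsum
    refine Nat.eq_of_mul_eq_mul_left (by omega : 0 < k + 1) ?_
    rw [← hsum, pow_succ]
    ring

end Pitman

section Graph

variable {V : Type*} {f g : V → Option V}

theorem reachable_fromRel_of_reflTransGen {R : V → V → Prop} {x y : V}
    (h : ReflTransGen R x y) : (fromRel R).Reachable x y := by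
  induction h with
  | refl => rfl
  | @tail y z _ hyz ih =>
    refine ih.trans ?_
    by_cases hyz' : y = z
    · rw [hyz']
    · exact (fromRel_adj R y z |>.mpr ⟨hyz', .inl hyz⟩).reachable

theorem IsRootedForest.eq_of_toGraph_eq (hf : IsRootedForest f) (hg : IsRootedForest g)
    (hroots : ∀ v, f v = none ↔ g v = none) (hgraph : toGraph f = toGraph g) : f = g := by
  have adj_f : ∀ {x y}, g x = some y → f x = some y ∨ f y = some x := fun h =>
    (toGraph_adj.mp (hgraph ▸ toGraph_adj.mpr ⟨hg.ne_of_step h, .inl h⟩)).2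
  have adj_g : ∀ {x y}, f x = some y → g x = some y ∨ g y = some x := fun h =>
    (toGraph_adj.mp (hgraph ▸ toGraph_adj.mpr ⟨hf.ne_of_step h, .inl h⟩)).2
  -- An edge reversed by `f` would force the next edge towards the root of `g` to be reversed
  -- too, and so on up to that root, which has no parent in `f`.
  have agree : ∀ x y, g x = some y → f y ≠ some x := by
    intro x
    obtain ⟨ρ, hxρ, hρ⟩ := hg x
    induction hxρ using ReflTransGen.head_induction_on with
    | refl => simp [hρ]
    | @head x y hxy _ ih =>
      intro y' hxy' hyx
      obtain rfl := rightUnique_step hxy hxy'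
      obtain ⟨z, hyz⟩ := Option.ne_none_iff_exists'.mp
        fun h => by simp [(hroots y).mpr h] at hyx
      rcases adj_f hyz with hfz | hfz
      · obtain rfl : x = z := Option.some_injective _ (hyx.symm.trans hfz)
        exact hg.not_step_of_step hxy hyz
      · exact ih z hyz hfz
  funext v
  cases hfv : f v with
  | none => exact ((hroots v).mp hfv).symm
  | some w => exact ((adj_g hfv).resolve_right fun hgw => agree w v hgw hfv).symm

end Graph

section Tree

variable {V : Type*} [Fintype V] {f : V → Option V}

theorem IsRootedForest.ncard_edgeSet_toGraph_add_card_roots (hf : IsRootedForest f) :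
    (toGraph f).edgeSet.ncard + #(roots f) = Nat.card V := by
  set e : V → Sym2 V := fun x => s(x, (f x).getD x)
  have he : ∀ {x y}, f x = some y → e x = s(x, y) := fun h => by simp [e, h]
  have himage : (toGraph f).edgeSet = e '' (↑(roots f))ᶜ := by
    ext ⟨x, y⟩
    simp only [mem_edgeSet, toGraph_adj, Set.mem_image, Set.mem_compl_iff, mem_coe, mem_roots]
    constructor
    · rintro ⟨-, hxy | hyx⟩
      · exact ⟨x, by simp [hxy], he hxy⟩
      · exact ⟨y, by simp [hyx], (he hyx).trans Sym2.eq_swap⟩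
    · rintro ⟨z, hz, hzxy⟩
      obtain ⟨w, hzw⟩ := Option.ne_none_iff_exists'.mp hz
      rw [he hzw, Sym2.eq_iff] at hzxy
      rcases hzxy with ⟨rfl, rfl⟩ | ⟨rfl, rfl⟩
      · exact ⟨hf.ne_of_step hzw, .inl hzw⟩
      · exact ⟨(hf.ne_of_step hzw).symm, .inr hzw⟩
  have hinj : Set.InjOn e (↑(roots f))ᶜ := by
    intro x hx y hy hxy
    obtain ⟨x', hxx'⟩ := Option.ne_none_iff_exists'.mp (by simpa using hx)
    obtain ⟨y', hyy'⟩ := Option.ne_none_iff_exists'.mp (by simpa using hy)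
    rw [he hxx', he hyy', Sym2.eq_iff] at hxy
    rcases hxy with ⟨h, -⟩ | ⟨rfl, rfl⟩
    · exact h
    · exact (hf.not_step_of_step hxx' hyy').elim
  rw [himage, hinj.ncard_image, add_comm, ← Set.ncard_coe_finset, Set.ncard_add_ncard_compl]

theorem IsRootedForest.isTree_toGraph (hf : IsRootedForest f) (h : #(roots f) = 1) :
    (toGraph f).IsTree := by
  obtain ⟨r, hr⟩ := card_eq_one.mp h
  rw [isTree_iff_connected_and_card, Nat.card_coe_set_eq]
  refine ⟨(connected_iff_exists_forall_reachable _).mpr ⟨r, fun v => ?_⟩, ?_⟩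
  · obtain ⟨r', hvr', hr'⟩ := hf v
    obtain rfl : r' = r := by simpa [hr] using mem_roots.mpr hr'
    exact (reachable_fromRel_of_reflTransGen hvr').symm
  · have := hf.ncard_edgeSet_toGraph_add_card_roots
    omega

end Tree

section OfTree

variable {V : Type*} [DecidableEq V] {T : SimpleGraph V} (hT : T.IsTree) {r v x y : V}

noncomputable def ofTree (r v : V) : Option V :=
  if v = r then none else some (hT.existsUnique_path v r).exists.choose.snd

theorem ofTree_eq_none_iff : ofTree hT r v = none ↔ v = r := by
  unfold ofTree
  split_ifs <;> simp [*]

theorem ofTree_eq_some_snd {p : T.Walk v r} (hp : p.IsPath) (hv : v ≠ r) :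
    ofTree hT r v = some p.snd := by
  rw [ofTree, if_neg hv,
    (hT.existsUnique_path v r).unique (hT.existsUnique_path v r).exists.choose_spec hp]

theorem adj_of_step_ofTree (h : Step (ofTree hT r) x y) : T.Adj x y := by
  unfold Step ofTree at h
  split_ifs at h with hx
  obtain rfl := Option.some_injective _ h
  exact Walk.adj_snd (Walk.not_nil_of_ne hx)

theorem reflTransGen_ofTree : ∀ {v : V} (p : T.Walk v r), p.IsPath →
    ReflTransGen (Step (ofTree hT r)) v r
  | _, .nil, _ => .refl
  | _, .cons h p, hp => by
    have hv := ((Walk.cons_isPath_iff _ _).mp hp)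
    refine .head ?_ (reflTransGen_ofTree p hv.1)
    rw [Step, ofTree_eq_some_snd hT hp (fun hvr => hv.2 (hvr ▸ p.end_mem_support)), Walk.snd_cons]

theorem isRootedForest_ofTree : IsRootedForest (ofTree hT r) := fun v =>
  ⟨r, reflTransGen_ofTree hT _ (hT.existsUnique_path v r).exists.choose_spec,
    (ofTree_eq_none_iff hT).mpr rfl⟩

theorem toGraph_ofTree : toGraph (ofTree hT r) = T := by
  ext x y
  rw [toGraph_adj]
  refine ⟨fun ⟨_, h⟩ => h.elim (adj_of_step_ofTree hT) (adj_of_step_ofTree hT · |>.symm),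
    fun hxy => ⟨hxy.ne, ?_⟩⟩
  obtain ⟨p, hp, -⟩ := hT.existsUnique_path y r
  by_cases hx : x ∈ p.support
  · have hyr : y ≠ r := by
      rintro rfl
      rw [Walk.nil_iff_support_eq.mp (Walk.isPath_iff_nil.mp hp), List.mem_singleton] at hx
      exact hxy.ne hx
    rw [ofTree_eq_some_snd hT hp hyr, ← hT.isAcyclic.eq_snd_of_adj_start hp hxy.symm hx]
    exact .inr rfl
  · have hxr : x ≠ r := fun h => hx (h ▸ p.end_mem_support)
    rw [ofTree_eq_some_snd hT (hp.cons hx (h := hxy)) hxr, Walk.snd_cons]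
    exact .inl rfl

end OfTree

section Count

variable {V : Type*} [Fintype V] [DecidableEq V]

theorem roots_ofTree {T : SimpleGraph V} (hT : T.IsTree) (r : V) : roots (ofTree hT r) = {r} := by
  ext v
  simp [ofTree_eq_none_iff]

theorem card_rootedTrees_eq_card_isTree_mul (P : SimpleGraph V → Prop) :
    Nat.card {q : V → Option V // IsRootedForest q ∧ #(roots q) = 1 ∧ P (toGraph q)} =
      Nat.card {T : SimpleGraph V // T.IsTree ∧ P T} * Fintype.card V := by
  let φ : {T : SimpleGraph V // T.IsTree ∧ P T} × V →
      {q : V → Option V // IsRootedForest q ∧ #(roots q) = 1 ∧ P (toGraph q)} :=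
    fun x => ⟨ofTree x.1.2.1 x.2, isRootedForest_ofTree _, by rw [roots_ofTree, card_singleton],
      by rw [toGraph_ofTree]; exact x.1.2.2⟩
  have hφ : Function.Bijective φ := by
    refine ⟨fun ⟨⟨T, hT, _⟩, r⟩ ⟨⟨T', hT', _⟩, r'⟩ h => ?_,
      fun ⟨q, hq, hq1, hP⟩ => ?_⟩
    · have h : ofTree hT r = ofTree hT' r' := congrArg Subtype.val h
      have hr : r = r' := singleton_injective (by rw [← roots_ofTree hT, h, roots_ofTree])
      have hT : T = T' := by rw [← toGraph_ofTree hT (r := r), h, toGraph_ofTree]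
      subst hr hT
      rfl
    · obtain ⟨r, hr⟩ := card_eq_one.mp hq1
      have hT := hq.isTree_toGraph hq1
      refine ⟨(⟨toGraph q, hT, hP⟩, r), Subtype.ext ?_⟩
      refine (isRootedForest_ofTree hT).eq_of_toGraph_eq hq (fun v => ?_) (toGraph_ofTree hT)
      rw [ofTree_eq_none_iff, ← mem_roots, hr, mem_singleton]
  rw [← Nat.card_congr (Equiv.ofBijective φ hφ), Nat.card_prod,
    Nat.card_eq_fintype_card (α := V)]

end Count

section TwoEdges

variable {V : Type*} [DecidableEq V] {x y z w : V}

def twoEdges (x y z w : V) : V → Option V := graft (graft (fun _ => none) x y) z w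

theorem isRootedForest_twoEdges (hxy : x ≠ y) (hzw : z ≠ w) (hzx : z ≠ x) (hwx : w ≠ x) :
    IsRootedForest (twoEdges x y z w) :=
  isRootedForest_graft_of_eq_none (isRootedForest_graft_of_eq_none isRootedForest_none rfl rfl hxy)
    (by simp [graft, hzx]) (by simp [graft, hwx]) hzw

variable [Fintype V]

theorem card_roots_twoEdges (hzx : z ≠ x) :
    #(roots (twoEdges x y z w)) = Fintype.card V - 2 := by
  have hroots : roots (fun _ : V => none) = univ := by ext; simp
  rw [twoEdges, roots_graft, roots_graft, hroots, card_erase_of_mem (by simp [hzx]),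
    card_erase_of_mem (mem_univ x), card_univ]
  rfl

theorem mem_treesAbove_twoEdges {q : V → Option V} (hzx : z ≠ x) :
    q ∈ treesAbove (twoEdges x y z w) ↔
      IsRootedForest q ∧ #(roots q) = 1 ∧ q x = some y ∧ q z = some w := by
  rw [twoEdges, mem_treesAbove, step_graft_le_iff (by simp [graft, hzx]), step_graft_le_iff rfl]
  have : Step (fun _ : V => none) ≤ Step q := fun _ _ h => (Option.some_ne_none _ h.symm).elim
  tauto

theorem card_rootedTrees_adj_adj {a b c : V} (hab : a ≠ b) (hac : a ≠ c) (hbc : b ≠ c) :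
    Nat.card {q : V → Option V //
        IsRootedForest q ∧ #(roots q) = 1 ∧ (toGraph q).Adj a b ∧ (toGraph q).Adj a c} =
      #(treesAbove (twoEdges b a c a)) + #(treesAbove (twoEdges c a a b)) +
        #(treesAbove (twoEdges b a a c)) := by
  have hsplit : ∀ q, (IsRootedForest q ∧ #(roots q) = 1 ∧
        (toGraph q).Adj a b ∧ (toGraph q).Adj a c) ↔
      q ∈ treesAbove (twoEdges b a c a) ∪ treesAbove (twoEdges c a a b) ∪
        treesAbove (twoEdges b a a c) := by
    intro q
    simp only [mem_union, mem_treesAbove_twoEdges hbc.symm, mem_treesAbove_twoEdges hac,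
      mem_treesAbove_twoEdges hab, toGraph_adj_adj_iff hab hac hbc]
    tauto
  have hdisj₁ : Disjoint (treesAbove (twoEdges b a c a)) (treesAbove (twoEdges c a a b)) := by
    refine disjoint_left.mpr fun q h₁ h₂ => ?_
    rw [mem_treesAbove_twoEdges hbc.symm] at h₁
    rw [mem_treesAbove_twoEdges hac] at h₂
    exact h₁.1.not_step_of_step h₁.2.2.1 h₂.2.2.2
  have hdisj₂ : Disjoint (treesAbove (twoEdges b a c a) ∪ treesAbove (twoEdges c a a b))
      (treesAbove (twoEdges b a a c)) := by
    refine disjoint_left.mpr fun q h₁₂ h₃ => ?_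
    rw [mem_treesAbove_twoEdges hab] at h₃
    rw [mem_union, mem_treesAbove_twoEdges hbc.symm, mem_treesAbove_twoEdges hac] at h₁₂
    rcases h₁₂ with h₁ | h₂
    · exact h₃.1.not_step_of_step h₁.2.2.2 h₃.2.2.2
    · exact hbc (Option.some_injective _ (h₂.2.2.2.symm.trans h₃.2.2.2))
  rw [Nat.card_congr (Equiv.subtypeEquivRight hsplit), Nat.card_eq_finsetCard,
    card_union_of_disjoint hdisj₂, card_union_of_disjoint hdisj₁]

theorem card_isTree_adj_adj_mul_card {a b c : V} (hab : a ≠ b) (hac : a ≠ c) (hbc : b ≠ c) :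
    Nat.card {T : SimpleGraph V // T.IsTree ∧ T.Adj a b ∧ T.Adj a c} * Fintype.card V =
      3 * Fintype.card V ^ (Fintype.card V - 3) := by
  have h3 : 3 ≤ Fintype.card V := by simpa [hab, hac, hbc] using card_le_univ {a, b, c}
  have hcard : ∀ {x y z w : V}, x ≠ y → z ≠ w → z ≠ x → w ≠ x →
      #(treesAbove (twoEdges x y z w)) = Fintype.card V ^ (Fintype.card V - 3) :=
    fun hxy hzw hzx hwx => (isRootedForest_twoEdges hxy hzw hzx hwx).card_treesAbove
      (by rw [card_roots_twoEdges hzx]; omega)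
  rw [← card_rootedTrees_eq_card_isTree_mul, card_rootedTrees_adj_adj hab hac hbc,
    hcard hab.symm hac.symm hbc.symm hab, hcard hac.symm hab hac hbc,
    hcard hab.symm hac hab hbc.symm]
  ring

end TwoEdges

end ParentMap

/-- For `n ≥ 3` and two distinct edges `{a,b}`, `{a,c}` of `K_n`
sharing exactly one endpoint `a`, the number of spanning trees of `K_n` containing
both edges equals `3 · n^(n-4)` (read in `ℚ`, with an integer power of `n`);
equivalently, the probability that a uniformly random spanning tree contains both
edges equals `3/n²`. -/
theorem spanning_trees_containing_two_adjacent_edges (n : ℕ) (hn : 3 ≤ n)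
    (a b c : Fin n) (hab : a ≠ b) (hac : a ≠ c) (hbc : b ≠ c) :
    (Nat.card {T : SimpleGraph (Fin n) // T.IsTree ∧ T.Adj a b ∧ T.Adj a c} : ℚ) =
        3 * (n : ℚ) ^ ((n : ℤ) - 4) ∧
      (Nat.card {T : SimpleGraph (Fin n) // T.IsTree ∧ T.Adj a b ∧ T.Adj a c} : ℚ) /
          (n : ℚ) ^ (n - 2) = 3 / n ^ 2 := by
  have hcount := ParentMap.card_isTree_adj_adj_mul_card hab hac hbc
  rw [Fintype.card_fin] at hcount
  set N := Nat.card {T : SimpleGraph (Fin n) // T.IsTree ∧ T.Adj a b ∧ T.Adj a c}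
  have hn0 : (n : ℚ) ≠ 0 := by positivity
  have hNq : (N : ℚ) * n = 3 * (n : ℚ) ^ (n - 3) := by exact_mod_cast hcount
  have h4 : (n : ℚ) ^ ((n : ℤ) - 4) = (n : ℚ) ^ (n - 3) / n := by
    rw [show (n : ℤ) - 4 = ((n - 3 : ℕ) : ℤ) - 1 by omega, zpow_sub₀ hn0, zpow_natCast,
      zpow_one]
  have h2 : (n : ℚ) ^ (n - 2) = (n : ℚ) ^ (n - 3) * n := by
    rw [← pow_succ]
    congr 1
    omega
  constructor
  · rw [h4, ← mul_div_assoc, eq_div_iff hn0, hNq]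
  · rw [h2, div_eq_div_iff (by positivity) (by positivity)]
    linear_combination (n : ℚ) * hNq
end
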